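/- arXiv:1505.00703 — 3 statements merged into one kernel-verified Lean document; each statement's English description precedes it below -/
import Mathlib

section
/- For every p ≥ 4, the p-cycle C_p — the graph on vertex set {1,…,p} with edge set {(i,i+1) : 1 ≤ i ≤ p−1} ∪ {(1,p)} — is a Generalized Bartlett graph, and the identity ordering on {1,…,p} is a GB ordering of C_p. -/
open SimpleGraph

variable {V : Type*}

/-- One step of the elimination/triangulation process: at step `k` (0-based) the vertex with
label `k` is eliminated, and all pairs of its neighbours with larger labels are joined. -/
def triStep {n : ℕ} (σ : V ≃ Fin n) (H : SimpleGraph V) (k : ℕ) : SimpleGraph V where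
  Adj u v := H.Adj u v ∨
    (u ≠ v ∧ ∃ hk : k < n, k < (σ u : ℕ) ∧ k < (σ v : ℕ) ∧
      H.Adj u (σ.symm ⟨k, hk⟩) ∧ H.Adj v (σ.symm ⟨k, hk⟩))
  symm := by
    constructor
    rintro u v (h | ⟨hne, hk, h1, h2, h3, h4⟩)
    · exact Or.inl h.symm
    · exact Or.inr ⟨hne.symm, hk, h2, h1, h4, h3⟩
  loopless := by
    constructor
    rintro u (h | ⟨hne, _⟩)
    · exact H.ne_of_adj h rfl
    · exact hne rfl

/-- The sequence of graphs `E_0, E_1, …` in the triangulation process. -/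
def triSeq {n : ℕ} (σ : V ≃ Fin n) (G : SimpleGraph V) : ℕ → SimpleGraph V
  | 0 => G
  | k + 1 => triStep σ (triSeq σ G k) k

/-- The triangulation `D^σ(G)` of `G` under the ordering `σ` (`p − 2` elimination steps). -/
def triangulation {n : ℕ} (σ : V ≃ Fin n) (G : SimpleGraph V) : SimpleGraph V :=
  triSeq σ G (n - 2)

/-- `σ` is a perfect elimination ordering of `G`: for every `j`, the vertex `σ⁻¹(j)` together
with its higher-labelled neighbours forms a clique. -/
def IsPerfectElimOrdering {n : ℕ} (σ : V ≃ Fin n) (G : SimpleGraph V) : Prop :=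
  ∀ j : Fin n,
    G.IsClique ({σ.symm j} ∪ {v : V | (j : ℕ) < (σ v : ℕ) ∧ G.Adj v (σ.symm j)})

/-- A graph is decomposable (chordal) if it has no induced cycle of length `≥ 4`. -/
def IsDecomposable (G : SimpleGraph V) : Prop :=
  ∀ n : ℕ, 4 ≤ n → IsEmpty (SimpleGraph.cycleGraph n ↪g G)

/-- `σ` is a Generalized Bartlett ordering of `G`: no triangle of `D^σ(G)` consists of three
non-edges of `G`. -/
def IsGBOrdering {n : ℕ} (σ : V ≃ Fin n) (G : SimpleGraph V) : Prop :=
  ¬ ∃ u v w : V,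
      ¬ G.Adj u v ∧ ¬ G.Adj v w ∧ ¬ G.Adj u w ∧
      (triangulation σ G).Adj u v ∧ (triangulation σ G).Adj v w ∧
      (triangulation σ G).Adj u w

/-- `G` is a Generalized Bartlett graph: it admits a Generalized Bartlett ordering. -/
def IsGB (G : SimpleGraph V) : Prop :=
  ∃ (n : ℕ) (σ : V ≃ Fin n), IsGBOrdering σ G

/-!
Under the identity ordering, every fill-in edge of the cycle ends at the last vertex `p - 1`:
when vertex `k < p - 1` is eliminated, its later neighbours in `E_k` are only `k + 1` and
`p - 1`, because any edge added earlier already ends at `p - 1`. Three fill-in edges forming a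
triangle would then need two of its three vertices to be `p - 1`.
-/

variable {n : ℕ} {σ : V ≃ Fin n} {G : SimpleGraph V}

theorem triSeq_adj_or_eq_of_subsingleton {t : V} (ht : ∀ u, σ u ≤ σ t)
    (hlater : ∀ x, {u | σ x < σ u ∧ G.Adj x u ∧ u ≠ t}.Subsingleton) :
    ∀ (k : ℕ) {u v : V}, (triSeq σ G k).Adj u v → G.Adj u v ∨ u = t ∨ v = t
  | 0, _, _, h => Or.inl h
  | k + 1, u, v, h => by
    rcases h with h | ⟨huv, hk, hu, hv, hux, hvx⟩
    · exact triSeq_adj_or_eq_of_subsingleton ht hlater k h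
    set x := σ.symm ⟨k, hk⟩
    have hx : (σ x : ℕ) = k := by simp [x]
    have hxt : x ≠ t := fun hxt => by
      have := ht u
      rw [Fin.le_def, ← hxt] at this
      omega
    have hnbr : ∀ w, (k : ℕ) < σ w → (triSeq σ G k).Adj w x →
        w = t ∨ w ∈ {u | σ x < σ u ∧ G.Adj x u ∧ u ≠ t} := fun w hw hwx => by
      by_cases hwt : w = t
      · exact Or.inl hwt
      rcases triSeq_adj_or_eq_of_subsingleton ht hlater k hwx with h | h | h
      · exact Or.inr ⟨by rw [Fin.lt_def]; omega, h.symm, hwt⟩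
      · exact absurd h hwt
      · exact absurd h hxt
    rcases hnbr u hu hux with hut | hu'
    · exact Or.inr (Or.inl hut)
    rcases hnbr v hv hvx with hvt | hv'
    · exact Or.inr (Or.inr hvt)
    exact absurd (hlater x hu' hv') huv

theorem isGBOrdering_of_triangulation_adj_or_eq (t : V)
    (h : ∀ u v, (triangulation σ G).Adj u v → G.Adj u v ∨ u = t ∨ v = t) :
    IsGBOrdering σ G := by
  rintro ⟨u, v, w, huv, hvw, huw, duv, dvw, duw⟩
  rcases h u v duv with h₁ | h₁ | h₁ <;> rcases h v w dvw with h₂ | h₂ | h₂ <;>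
    rcases h u w duw with h₃ | h₃ | h₃ <;> subst_vars <;> simp_all

/-- for `p ≥ 4` the `p`-cycle (vertices `{1,…,p}`, here 0-based as `Fin p`, with
edges `(i,i+1)` for `1 ≤ i ≤ p−1` and `(1,p)`) is Generalized Bartlett, and the identity
ordering is a GB ordering. -/
theorem isGB_cycle (p : ℕ) (hp : 4 ≤ p) (C : SimpleGraph (Fin p))
    (hC : ∀ a b : Fin p, C.Adj a b ↔
      ((b : ℕ) = (a : ℕ) + 1 ∨ (a : ℕ) = (b : ℕ) + 1 ∨
        ((a : ℕ) = 0 ∧ (b : ℕ) = p - 1) ∨ ((b : ℕ) = 0 ∧ (a : ℕ) = p - 1))) :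
    IsGBOrdering (Equiv.refl (Fin p)) C ∧ IsGB C := by
  obtain ⟨m, rfl⟩ : ∃ m, p = m + 1 := ⟨p - 1, by omega⟩
  have hlater : ∀ x : Fin (m + 1),
      {u | x < u ∧ C.Adj x u ∧ u ≠ Fin.last m}.Subsingleton := by
    rintro x u ⟨hxu, hu, hut⟩ v ⟨hxv, hv, hvt⟩
    rw [hC] at hu hv
    rw [Fin.lt_def] at hxu hxv
    rw [Ne, Fin.ext_iff, Fin.val_last] at hut hvt
    exact Fin.ext (by omega)
  have hGB : IsGBOrdering (Equiv.refl (Fin (m + 1))) C :=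
    isGBOrdering_of_triangulation_adj_or_eq (Fin.last m) fun _ _ =>
      triSeq_adj_or_eq_of_subsingleton (fun u => Fin.le_last u) hlater _
  exact ⟨hGB, m + 1, Equiv.refl _, hGB⟩
end

section
/- (Generalized Bartlett implies Property-A and Property-B.) Let G be a graph on {1,…,p} with edge set E such that the identity ordering is a Generalized Bartlett ordering of G. Then G (with the identity ordering) satisfies both Property-A and Property-B. -/
open SimpleGraph

variable {V : Type*}

open scoped Classical BigOperators

/-- Column `j` (as a natural number), row `i`, of the modified Cholesky factor `L(L_I, D)`:
`L_{jj} = 1`, `L_{ij} = 0` for `i < j`, `L_{ij} = ℓ_{ij}` for `i > j` with `(i,j) ∈ E`, and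
`L_{ij} = −(∑_{k<j} L_{ik} L_{jk} D_k)/D_j` for `i > j` with `(i,j) ∉ E`. -/
noncomputable def cholCol (p : ℕ) (G : SimpleGraph (Fin p)) (ℓ : Fin p → Fin p → ℝ)
    (D : Fin p → ℝ) : ℕ → Fin p → ℝ
  | j => fun i =>
    if hj : j < p then
      if (i : ℕ) = j then 1
      else if (i : ℕ) < j then 0
      else if G.Adj i ⟨j, hj⟩ then ℓ i ⟨j, hj⟩
      else -(∑ k ∈ (Finset.range j).attach,
          cholCol p G ℓ D k.1 i * cholCol p G ℓ D k.1 ⟨j, hj⟩ *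
            D ⟨k.1, (Finset.mem_range.mp k.2).trans hj⟩) / D ⟨j, hj⟩
    else 0
termination_by j => j
decreasing_by all_goals exact Finset.mem_range.mp k.2

/-- Recover `D` from `D̃`:  `D_k = ∏_{l ≤ k} D̃_l`. -/
noncomputable def Dof (p : ℕ) (Dt : Fin p → ℝ) (k : Fin p) : ℝ :=
  ∏ l ∈ Finset.Iic k, Dt l

/-- Update the `(r,s)` entry of a function of two indices. -/
def updEntry (p : ℕ) (ℓ : Fin p → Fin p → ℝ) (r s : Fin p) (t : ℝ) :
    Fin p → Fin p → ℝ :=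
  fun i j => if i = r ∧ j = s then t else ℓ i j

/-- Property-A: each dependent entry `L_{ij}` (`i > j`, `(i,j) ∉ E`) is an affine function of
each independent entry `ℓ_{rs}` (`r > s`, `(r,s) ∈ E`), all other independent entries and all
of `D̃` being held fixed at arbitrary values. -/
def PropertyA (p : ℕ) (G : SimpleGraph (Fin p)) : Prop :=
  ∀ i j : Fin p, j < i → ¬ G.Adj i j →
    ∀ r s : Fin p, s < r → G.Adj r s →
      ∀ (ℓ : Fin p → Fin p → ℝ) (Dt : Fin p → ℝ), (∀ k, 0 < Dt k) →
        ∃ a b : ℝ, ∀ t : ℝ,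
          cholCol p G (updEntry p ℓ r s t) (Dof p Dt) (j : ℕ) i = a * t + b

/-- Property-B: each dependent entry `L_{ij}` (`i > j`, `(i,j) ∉ E`), viewed as a function of
each single `D̃_k` with all other variables held fixed, has the form `a + b / D̃_k`. -/
def PropertyB (p : ℕ) (G : SimpleGraph (Fin p)) : Prop :=
  ∀ i j : Fin p, j < i → ¬ G.Adj i j →
    ∀ k : Fin p,
      ∀ (ℓ : Fin p → Fin p → ℝ) (Dt : Fin p → ℝ), (∀ k', 0 < Dt k') →
        ∃ a b : ℝ, ∀ t : ℝ, 0 < t →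
          cholCol p G ℓ (Dof p (Function.update Dt k t)) (j : ℕ) i = a + b / t

/-!
Write `T` for the triangulation. Expanding `L_{ij} = -∑_{k<j} L_{ik} L_{jk} (D_k / D_j)`, an
entry outside `T` vanishes (fill-in: `T` is closed under the elimination step), and in the sum
for a non-edge `(i, j)` the GB condition forbids both `(i, k)` and `(j, k)` to be non-edges of
`G` inside `T`. So every surviving term has at most one factor depending on the chosen variable:
for `ℓ_{rs}`, an edge factor `ℓ_{ik}` is either another variable or is `ℓ_{rs}` itself, in which
case the other factor `L_{jk}` does not involve it; for `D̃_q`, the ratio `D_k / D_j` is constant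
when `q ≤ k` and the columns `k < q` do not involve `D̃_q`. Affinity in `ℓ_{rs}`, resp. in
`1 / D̃_q`, then propagates by induction on the column.
-/

theorem triSeq_mono {n : ℕ} (σ : V ≃ Fin n) (G : SimpleGraph V) : Monotone (triSeq σ G) :=
  monotone_nat_of_le_succ fun _ _ _ h => Or.inl h

theorem le_triangulation {n : ℕ} (σ : V ≃ Fin n) (G : SimpleGraph V) : G ≤ triangulation σ G :=
  triSeq_mono σ G (Nat.zero_le _)

/-- Steps `M, M+1, …` only join vertices with labels `> M`. -/
theorem triSeq_adj_of_le {n : ℕ} (σ : V ≃ Fin n) (G : SimpleGraph V) {u v : V} {M N : ℕ}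
    (hMN : M ≤ N) (hu : (σ u : ℕ) ≤ M) (h : (triSeq σ G N).Adj u v) :
    (triSeq σ G M).Adj u v := by
  induction N, hMN using Nat.le_induction with
  | base => exact h
  | succ N hMN ih =>
    rcases h with h | ⟨-, -, hNu, -⟩
    · exact ih h
    · omega

theorem triangulation_adj_of_adj_of_adj {n : ℕ} (σ : V ≃ Fin n) (G : SimpleGraph V)
    {i j m : V} (hij : i ≠ j) (hmi : σ m < σ i) (hmj : σ m < σ j)
    (him : (triangulation σ G).Adj i m) (hjm : (triangulation σ G).Adj j m) :
    (triangulation σ G).Adj i j := by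
  have hσ : σ i ≠ σ j := σ.injective.ne hij
  have hle : (σ m : ℕ) + 1 ≤ n - 2 := by
    have := (σ i).2; have := (σ j).2; rw [Fin.lt_def] at hmi hmj; rw [Ne, Fin.ext_iff] at hσ
    omega
  have hm : σ.symm ⟨σ m, (σ m).2⟩ = m := by simp
  refine triSeq_mono σ G hle (Or.inr ⟨hij, (σ m).2, hmi, hmj, ?_, ?_⟩) <;> rw [hm]
  · exact triSeq_adj_of_le σ G (by omega) le_rfl him.symm |>.symm
  · exact triSeq_adj_of_le σ G (by omega) le_rfl hjm.symm |>.symm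

theorem IsGBOrdering.adj_or_adj_of_triangulation_adj {n : ℕ} {σ : V ≃ Fin n} {G : SimpleGraph V}
    (hGB : IsGBOrdering σ G) {i j k : V} (hij : i ≠ j) (hnij : ¬ G.Adj i j)
    (hki : σ k < σ i) (hkj : σ k < σ j)
    (hik : (triangulation σ G).Adj i k) (hjk : (triangulation σ G).Adj j k) :
    G.Adj i k ∨ G.Adj j k := by
  by_contra! h
  exact hGB ⟨i, j, k, hnij, h.2, h.1,
    triangulation_adj_of_adj_of_adj σ G hij hki hkj hik hjk, hjk, hik⟩

section Cholesky

variable {p : ℕ} (G : SimpleGraph (Fin p)) (ℓ : Fin p → Fin p → ℝ) (D : Fin p → ℝ)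

/-- The entry `L_{ij}`; note that `cholCol` takes the column index first. -/
noncomputable def cholEntry (i j : Fin p) : ℝ := cholCol p G ℓ D j i

variable {G ℓ D}

theorem cholEntry_self (i : Fin p) : cholEntry G ℓ D i i = 1 := by
  rw [cholEntry, cholCol]
  beta_reduce
  rw [dif_pos i.2, if_pos rfl]

theorem cholEntry_of_lt {i j : Fin p} (h : i < j) : cholEntry G ℓ D i j = 0 := by
  rw [cholEntry, cholCol]
  beta_reduce
  rw [dif_pos j.2, if_neg (Fin.val_ne_of_ne h.ne), if_pos (Fin.lt_def.mp h)]

theorem cholEntry_of_adj {i j : Fin p} (h : j < i) (hij : G.Adj i j) :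
    cholEntry G ℓ D i j = ℓ i j := by
  rw [cholEntry, cholCol]
  beta_reduce
  rw [dif_pos j.2, if_neg (Fin.val_ne_of_ne h.ne'), if_neg (by omega), if_pos hij]

theorem cholEntry_of_not_adj {i j : Fin p} (h : j < i) (hij : ¬ G.Adj i j) :
    cholEntry G ℓ D i j =
      -∑ k ∈ Finset.Iio j, cholEntry G ℓ D i k * cholEntry G ℓ D j k * (D k / D j) := by
  rw [cholEntry, cholCol]
  beta_reduce
  rw [dif_pos j.2, if_neg (Fin.val_ne_of_ne h.ne'), if_neg (by omega), if_neg hij,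
    neg_div, Finset.sum_div]
  congr 1
  refine Finset.sum_bij' (fun k _ => ⟨k.1, (Finset.mem_range.mp k.2).trans j.2⟩)
    (fun k hk => ⟨k, Finset.mem_range.mpr (Fin.lt_def.mp (Finset.mem_Iio.mp hk))⟩) ?_ ?_ ?_ ?_ ?_
  · exact fun k _ => Finset.mem_Iio.mpr (Finset.mem_range.mp k.2)
  · exact fun k _ => Finset.mem_attach _ _
  · exact fun k _ => rfl
  · exact fun k _ => rfl
  · exact fun k _ => mul_div_assoc _ _ _

theorem cholEntry_congr {ℓ' : Fin p → Fin p → ℝ} {D' : Fin p → ℝ} (k x : Fin p)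
    (hℓ : ∀ u v, v < k ∨ (v = k ∧ u = x) → ℓ u v = ℓ' u v) (hD : ∀ v ≤ k, D v = D' v) :
    cholEntry G ℓ D x k = cholEntry G ℓ' D' x k := by
  induction k using WellFoundedLT.induction generalizing x with
  | _ k ih =>
    rcases lt_trichotomy x k with hxk | rfl | hkx
    · rw [cholEntry_of_lt hxk, cholEntry_of_lt hxk]
    · rw [cholEntry_self, cholEntry_self]
    by_cases hadj : G.Adj x k
    · rw [cholEntry_of_adj hkx hadj, cholEntry_of_adj hkx hadj, hℓ x k (Or.inr ⟨rfl, rfl⟩)]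
    rw [cholEntry_of_not_adj hkx hadj, cholEntry_of_not_adj hkx hadj, hD k le_rfl]
    refine congrArg Neg.neg (Finset.sum_congr rfl fun m hm => ?_)
    have hmk := Finset.mem_Iio.mp hm
    have hℓm : ∀ y u v, v < m ∨ (v = m ∧ u = y) → ℓ u v = ℓ' u v := by
      rintro y u v (hv | ⟨rfl, -⟩)
      · exact hℓ u v (Or.inl (hv.trans hmk))
      · exact hℓ u v (Or.inl hmk)
    rw [ih m hmk x (hℓm x) (fun v hv => hD v (hv.trans hmk.le)),
      ih m hmk k (hℓm k) (fun v hv => hD v (hv.trans hmk.le)), hD m hmk.le]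

theorem cholEntry_eq_zero_of_not_adj_triangulation {i j : Fin p} (hji : j < i)
    (hT : ¬ (triangulation (Equiv.refl (Fin p)) G).Adj i j) : cholEntry G ℓ D i j = 0 := by
  induction j using WellFoundedLT.induction generalizing i with
  | _ j ih =>
    rw [cholEntry_of_not_adj hji fun h => hT (le_triangulation _ G h), neg_eq_zero]
    refine Finset.sum_eq_zero fun k hk => ?_
    have hkj := Finset.mem_Iio.mp hk
    by_cases hik : (triangulation (Equiv.refl (Fin p)) G).Adj i k
    · have hjk : ¬ (triangulation (Equiv.refl (Fin p)) G).Adj j k := fun hjk =>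
        hT (triangulation_adj_of_adj_of_adj _ G hji.ne' (hkj.trans hji) hkj hik hjk)
      rw [ih k hkj hkj hjk, mul_zero, zero_mul]
    · rw [ih k hkj (hkj.trans hji) hik, zero_mul, zero_mul]

/-- In the sum defining a dependent entry `L_{ij}`, a term with two dependent factors vanishes:
by fill-in if `(i, j)` lies outside the triangulation, by the GB condition otherwise. -/
theorem IsGBOrdering.cholEntry_mul_eq_zero_or_adj (hGB : IsGBOrdering (Equiv.refl (Fin p)) G)
    {i j k : Fin p} (hkj : k < j) (hji : j < i) (hij : ¬ G.Adj i j) :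
    (∀ ℓ D, cholEntry G ℓ D i k * cholEntry G ℓ D j k = 0) ∨ G.Adj i k ∨ G.Adj j k := by
  by_cases hik : (triangulation (Equiv.refl (Fin p)) G).Adj i k
  · by_cases hjk : (triangulation (Equiv.refl (Fin p)) G).Adj j k
    · exact Or.inr (hGB.adj_or_adj_of_triangulation_adj hji.ne' hij (hkj.trans hji) hkj hik hjk)
    · exact Or.inl fun ℓ D => by
        rw [cholEntry_eq_zero_of_not_adj_triangulation hkj hjk, mul_zero]
  · exact Or.inl fun ℓ D => by
      rw [cholEntry_eq_zero_of_not_adj_triangulation (hkj.trans hji) hik, zero_mul]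

end Cholesky

def IsAffineIn (φ : ℝ → ℝ) (S : Set ℝ) (f : ℝ → ℝ) : Prop :=
  ∃ a b : ℝ, ∀ t ∈ S, f t = a + b * φ t

def IsConstOn (S : Set ℝ) (f : ℝ → ℝ) : Prop :=
  ∃ c : ℝ, ∀ t ∈ S, f t = c

namespace IsConstOn

variable {S : Set ℝ} {f g : ℝ → ℝ}

theorem mul (hf : IsConstOn S f) (hg : IsConstOn S g) : IsConstOn S (fun t => f t * g t) := by
  obtain ⟨c, hc⟩ := hf
  obtain ⟨d, hd⟩ := hg
  exact ⟨c * d, fun t ht => by dsimp only; rw [hc t ht, hd t ht]⟩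

theorem isAffineIn (φ : ℝ → ℝ) (hf : IsConstOn S f) : IsAffineIn φ S f := by
  obtain ⟨c, hc⟩ := hf
  exact ⟨c, 0, fun t ht => by rw [hc t ht, zero_mul, add_zero]⟩

end IsConstOn

namespace IsAffineIn

variable {φ : ℝ → ℝ} {S : Set ℝ} {f g : ℝ → ℝ}

theorem neg (hf : IsAffineIn φ S f) : IsAffineIn φ S (fun t => -f t) := by
  obtain ⟨a, b, h⟩ := hf
  exact ⟨-a, -b, fun t ht => by dsimp only; rw [h t ht]; ring⟩

theorem sum {ι : Type*} (s : Finset ι) {F : ι → ℝ → ℝ} (hF : ∀ x ∈ s, IsAffineIn φ S (F x)) :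
    IsAffineIn φ S (fun t => ∑ x ∈ s, F x t) := by
  choose a b h using hF
  exact ⟨∑ x ∈ s.attach, a x.1 x.2, ∑ x ∈ s.attach, b x.1 x.2, fun t ht => by
    dsimp only
    rw [Finset.sum_mul, ← Finset.sum_add_distrib, ← Finset.sum_attach s]
    exact Finset.sum_congr rfl fun x _ => h x.1 x.2 t ht⟩

theorem mul_of_isConstOn_or (hf : IsAffineIn φ S f) (hg : IsAffineIn φ S g)
    (hc : IsConstOn S f ∨ IsConstOn S g) : IsAffineIn φ S (fun t => f t * g t) := by
  rcases hc with ⟨c, hc⟩ | ⟨c, hc⟩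
  · obtain ⟨a, b, h⟩ := hg
    exact ⟨c * a, c * b, fun t ht => by dsimp only; rw [hc t ht, h t ht]; ring⟩
  · obtain ⟨a, b, h⟩ := hf
    exact ⟨a * c, b * c, fun t ht => by dsimp only; rw [hc t ht, h t ht]; ring⟩

end IsAffineIn

section Parametric

variable {p : ℕ} {G : SimpleGraph (Fin p)} {φ : ℝ → ℝ} {S : Set ℝ}
  {ℓ : ℝ → Fin p → Fin p → ℝ} {D : ℝ → Fin p → ℝ}

theorem isAffineIn_cholEntry
    (hedge : ∀ x k, k < x → G.Adj x k → IsAffineIn φ S (fun t => ℓ t x k))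
    (hterm : ∀ i j k, k < j → j < i → ¬ G.Adj i j →
      IsAffineIn φ S (fun t => cholEntry G (ℓ t) (D t) i k) →
      IsAffineIn φ S (fun t => cholEntry G (ℓ t) (D t) j k) →
      IsAffineIn φ S (fun t =>
        cholEntry G (ℓ t) (D t) i k * cholEntry G (ℓ t) (D t) j k * (D t k / D t j)))
    (i j : Fin p) : IsAffineIn φ S (fun t => cholEntry G (ℓ t) (D t) i j) := by
  induction j using WellFoundedLT.induction generalizing i with
  | _ j ih =>
    rcases lt_trichotomy i j with hij | rfl | hji
    · exact IsConstOn.isAffineIn φ ⟨0, fun _ _ => cholEntry_of_lt hij⟩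
    · exact IsConstOn.isAffineIn φ ⟨1, fun _ _ => cholEntry_self i⟩
    by_cases hadj : G.Adj i j
    · simpa only [cholEntry_of_adj hji hadj] using hedge i j hji hadj
    simp only [cholEntry_of_not_adj hji hadj]
    exact (IsAffineIn.sum _ fun k hk => hterm i j k (Finset.mem_Iio.mp hk) hji hadj
      (ih k (Finset.mem_Iio.mp hk) i) (ih k (Finset.mem_Iio.mp hk) j)).neg

end Parametric

section PropertyA

variable {p : ℕ} {G : SimpleGraph (Fin p)}

theorem isAffineIn_updEntry (ℓ : Fin p → Fin p → ℝ) (r s x k : Fin p) :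
    IsAffineIn id Set.univ (fun t => updEntry p ℓ r s t x k) := by
  by_cases h : x = r ∧ k = s
  · exact ⟨0, 1, fun t _ => by simp only [updEntry, if_pos h, id, zero_add, one_mul]⟩
  · exact IsConstOn.isAffineIn id ⟨ℓ x k, fun t _ => by simp only [updEntry, if_neg h]⟩

/-- If `(x, k)` is the varying edge, column `k` of every other row does not see it. -/
theorem isConstOn_cholEntry_updEntry_or (ℓ : Fin p → Fin p → ℝ) (D : Fin p → ℝ)
    {r s x y k : Fin p} (hkx : k < x) (hxy : x ≠ y) (hxk : G.Adj x k) :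
    IsConstOn Set.univ (fun t => cholEntry G (updEntry p ℓ r s t) D x k) ∨
      IsConstOn Set.univ (fun t => cholEntry G (updEntry p ℓ r s t) D y k) := by
  by_cases h : x = r ∧ k = s
  · refine Or.inr ⟨cholEntry G (updEntry p ℓ r s 0) D y k, fun t _ => ?_⟩
    refine cholEntry_congr k y (fun u v huv => ?_) fun _ _ => rfl
    have : ¬ (u = r ∧ v = s) := by
      rintro ⟨hur, hvs⟩
      rcases huv with hv | ⟨-, huy⟩
      · exact hv.ne (hvs.trans h.2.symm)
      · exact hxy (h.1.trans (hur.symm.trans huy))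
    simp only [updEntry, if_neg this]
  · refine Or.inl ⟨ℓ x k, fun t _ => (cholEntry_of_adj hkx hxk).trans ?_⟩
    simp only [updEntry, if_neg h]

theorem IsGBOrdering.isAffineIn_cholEntry_updEntry (hGB : IsGBOrdering (Equiv.refl (Fin p)) G)
    (ℓ : Fin p → Fin p → ℝ) (D : Fin p → ℝ) (r s i j : Fin p) :
    IsAffineIn id Set.univ (fun t => cholEntry G (updEntry p ℓ r s t) D i j) := by
  refine isAffineIn_cholEntry (fun x k _ _ => isAffineIn_updEntry ℓ r s x k)
    (fun i j k hkj hji hij hik hjk => ?_) i j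
  have hratio : IsAffineIn id Set.univ (fun _ => D k / D j) :=
    IsConstOn.isAffineIn id ⟨_, fun _ _ => rfl⟩
  refine IsAffineIn.mul_of_isConstOn_or ?_ hratio (Or.inr ⟨_, fun _ _ => rfl⟩)
  rcases hGB.cholEntry_mul_eq_zero_or_adj hkj hji hij with h0 | hi | hj
  · exact IsConstOn.isAffineIn id ⟨0, fun t _ => h0 _ _⟩
  · exact hik.mul_of_isConstOn_or hjk
      (isConstOn_cholEntry_updEntry_or ℓ D (hkj.trans hji) hji.ne' hi)
  · exact hik.mul_of_isConstOn_or hjk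
      (isConstOn_cholEntry_updEntry_or ℓ D hkj hji.ne hj).symm

end PropertyA

section PropertyB

variable {p : ℕ} {G : SimpleGraph (Fin p)}

theorem Dof_update_of_lt (Dt : Fin p → ℝ) {q m : Fin p} (t : ℝ) (hm : m < q) :
    Dof p (Function.update Dt q t) m = Dof p Dt m :=
  Finset.prod_congr rfl fun _ hl =>
    Function.update_of_ne ((Finset.mem_Iic.mp hl).trans_lt hm).ne _ _

theorem Dof_update_of_le (Dt : Fin p → ℝ) {q m : Fin p} (t : ℝ) (hm : q ≤ m) :
    Dof p (Function.update Dt q t) m = t * Dof p (Function.update Dt q 1) m := by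
  simp only [Dof, Finset.prod_update_of_mem (Finset.mem_Iic.mpr hm), one_mul]

theorem isConstOn_Dof_update_div (Dt : Fin p → ℝ) {q k j : Fin p} (hqk : q ≤ k) (hkj : k ≤ j) :
    IsConstOn (Set.Ioi 0)
      (fun t => Dof p (Function.update Dt q t) k / Dof p (Function.update Dt q t) j) :=
  ⟨Dof p (Function.update Dt q 1) k / Dof p (Function.update Dt q 1) j, fun t ht => by
    dsimp only
    rw [Dof_update_of_le Dt t hqk, Dof_update_of_le Dt t (hqk.trans hkj),
      mul_div_mul_left _ _ (Set.mem_Ioi.mp ht).ne']⟩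

theorem isAffineIn_inv_Dof_update_div (Dt : Fin p → ℝ) {q k j : Fin p} (hkq : k < q) :
    IsAffineIn (·⁻¹) (Set.Ioi 0)
      (fun t => Dof p (Function.update Dt q t) k / Dof p (Function.update Dt q t) j) := by
  rcases lt_or_ge j q with hjq | hqj
  · exact IsConstOn.isAffineIn _ ⟨Dof p Dt k / Dof p Dt j, fun t _ => by
      dsimp only
      rw [Dof_update_of_lt Dt t hkq, Dof_update_of_lt Dt t hjq]⟩
  · exact ⟨0, Dof p Dt k / Dof p (Function.update Dt q 1) j, fun t _ => by
      dsimp only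
      rw [Dof_update_of_lt Dt t hkq, Dof_update_of_le Dt t hqj]
      ring⟩

variable (G) in
theorem isConstOn_cholEntry_Dof_update (ℓ : Fin p → Fin p → ℝ) (Dt : Fin p → ℝ) (S : Set ℝ)
    {q x k : Fin p} (hkq : k < q) :
    IsConstOn S (fun t => cholEntry G ℓ (Dof p (Function.update Dt q t)) x k) :=
  ⟨cholEntry G ℓ (Dof p Dt) x k, fun t _ =>
    cholEntry_congr k x (fun _ _ _ => rfl) fun _ hv => Dof_update_of_lt Dt t (hv.trans_lt hkq)⟩

theorem IsGBOrdering.isAffineIn_inv_cholEntry_Dof_update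
    (hGB : IsGBOrdering (Equiv.refl (Fin p)) G) (ℓ : Fin p → Fin p → ℝ) (Dt : Fin p → ℝ)
    (q i j : Fin p) :
    IsAffineIn (·⁻¹) (Set.Ioi 0)
      (fun t => cholEntry G ℓ (Dof p (Function.update Dt q t)) i j) := by
  refine isAffineIn_cholEntry (fun x k _ _ => IsConstOn.isAffineIn _ ⟨ℓ x k, fun _ _ => rfl⟩)
    (fun i j k hkj hji hij hik hjk => ?_) i j
  rcases lt_or_ge k q with hkq | hqk
  · have hLL := (isConstOn_cholEntry_Dof_update G ℓ Dt (Set.Ioi 0) (x := i) hkq).mul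
      (isConstOn_cholEntry_Dof_update G ℓ Dt _ (x := j) hkq)
    exact (hLL.isAffineIn _).mul_of_isConstOn_or (isAffineIn_inv_Dof_update_div Dt hkq)
      (Or.inl hLL)
  have hratio := isConstOn_Dof_update_div Dt hqk hkj.le
  refine IsAffineIn.mul_of_isConstOn_or ?_ (hratio.isAffineIn _) (Or.inr hratio)
  have hedge {x : Fin p} (hkx : k < x) (hxk : G.Adj x k) :
      IsConstOn (Set.Ioi 0) (fun t => cholEntry G ℓ (Dof p (Function.update Dt q t)) x k) :=
    ⟨ℓ x k, fun _ _ => cholEntry_of_adj hkx hxk⟩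
  rcases hGB.cholEntry_mul_eq_zero_or_adj hkj hji hij with h0 | hi | hj
  · exact IsConstOn.isAffineIn _ ⟨0, fun t _ => h0 _ _⟩
  · exact hik.mul_of_isConstOn_or hjk (Or.inl (hedge (hkj.trans hji) hi))
  · exact hik.mul_of_isConstOn_or hjk (Or.inr (hedge hkj hj))

end PropertyB

/-- Lemma: Generalized Bartlett implies Property-A and Property-B.  If the
identity ordering is a Generalized Bartlett ordering of `G`, then `G` (with the identity
ordering) satisfies both Property-A and Property-B. -/
theorem propertyA_and_propertyB_of_isGBOrdering (p : ℕ) (G : SimpleGraph (Fin p))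
    (hGB : IsGBOrdering (Equiv.refl (Fin p)) G) :
    PropertyA p G ∧ PropertyB p G := by
  refine ⟨fun i j _ _ r s _ _ ℓ Dt _ => ?_, fun i j _ _ q ℓ Dt _ => ?_⟩
  · obtain ⟨a, b, h⟩ := hGB.isAffineIn_cholEntry_updEntry ℓ (Dof p Dt) r s i j
    exact ⟨b, a, fun t => (h t trivial).trans (add_comm _ _)⟩
  · obtain ⟨a, b, h⟩ := hGB.isAffineIn_inv_cholEntry_Dof_update ℓ Dt q i j
    exact ⟨a, b, fun t ht => (h t ht).trans (by rw [div_eq_mul_inv])⟩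
end

section
/- (Theorem on maximality: Property-A and Property-B imply Generalized Bartlett.) Let G be a graph on {1,…,p} with edge set E. If G (with the identity ordering) satisfies both Property-A and Property-B, then the identity ordering is a Generalized Bartlett ordering of G; in particular G is a Generalized Bartlett graph. -/
/-!
An edge `a b` of the triangulation comes from a walk of `G` between `a` and `b` through vertices
below both. Suppose `u, v > w` span a triangle of fill-in edges, none of them in `G`. Shortest such
walks from `u` and from `v` down to `w` are induced paths. Weight `1` on the edges of one induced
path makes `L_{uw}` nonzero, since along an induced path the fill-in sum has a single nonzero term;
weighting the two paths by `τ` and `1 - τ` makes `L_{uw}` and `L_{vw}` nonzero at once, as both are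
polynomials in `τ`. Every weighted vertex is `u`, `v` or at most `w`, so rescaling `D̃_w` by `t`
turns `L_{uv}` into `K / t - L_{uw} L_{vw} / t²`, which is not of the form `a + b / t` required by
Property-B.
-/


open SimpleGraph

variable {V : Type*}

open scoped Classical BigOperators

open Finset Polynomial

structure IsInducedPath (G : SimpleGraph V) (x : ℕ → V) (n : ℕ) : Prop where
  injOn : Set.InjOn x (Set.Iic n)
  adj : ∀ r < n, G.Adj (x r) (x (r + 1))
  not_adj : ∀ r r', r + 1 < r' → r' ≤ n → ¬ G.Adj (x r) (x r')

lemma IsInducedPath.adj_iff {G : SimpleGraph V} {x : ℕ → V} {n r r' : ℕ}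
    (hx : IsInducedPath G x n) (hr : r ≤ n) (hr' : r' ≤ n) :
    G.Adj (x r) (x r') ↔ r + 1 = r' ∨ r' + 1 = r := by
  constructor
  · intro h
    by_contra hne
    rcases lt_trichotomy r r' with hlt | rfl | hgt
    · exact hx.not_adj r r' (by omega) hr' h
    · exact h.ne rfl
    · exact hx.not_adj r' r (by omega) hr h.symm
  · rintro (rfl | rfl)
    · exact hx.adj r (by omega)
    · exact (hx.adj r' (by omega)).symm

section LowWalks

variable [Preorder V] {G : SimpleGraph V}

structure IsLowWalk (G : SimpleGraph V) (c : V) (x : ℕ → V) (n : ℕ) : Prop where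
  adj : ∀ r < n, G.Adj (x r) (x (r + 1))
  lt : ∀ r, 0 < r → r < n → x r < c

def LowWalk (G : SimpleGraph V) (c a b : V) : Prop :=
  ∃ n x, 0 < n ∧ x 0 = a ∧ x n = b ∧ IsLowWalk G c x n

/-- Drops the vertices strictly between positions `r` and `r'`. -/
lemma IsLowWalk.splice {c : V} {x : ℕ → V} {n r r' : ℕ} (hx : IsLowWalk G c x n)
    (hrr' : r < r') (hr' : r' ≤ n) (hadj : G.Adj (x r) (x r')) :
    ∃ y : ℕ → V, y 0 = x 0 ∧ y (n - (r' - r - 1)) = x n ∧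
      IsLowWalk G c y (n - (r' - r - 1)) := by
  refine ⟨fun i => if i ≤ r then x i else x (i + (r' - r - 1)), by simp, ?_, ⟨?_, ?_⟩⟩
  · simp only [if_neg (show ¬ n - (r' - r - 1) ≤ r by omega)]
    congr 1
    omega
  · intro i hi
    by_cases hir : i + 1 ≤ r
    · simp only [if_pos hir, if_pos (show i ≤ r by omega)]
      exact hx.adj i (by omega)
    by_cases hi' : i ≤ r
    · rw [if_pos hi', if_neg hir, show i + 1 + (r' - r - 1) = r' by omega, show i = r by omega]
      exact hadj
    · simp only [if_neg hi', if_neg hir, show i + 1 + (r' - r - 1) = i + (r' - r - 1) + 1 by omega]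
      exact hx.adj _ (by omega)
  · intro i h0 hi
    split_ifs
    · exact hx.lt i h0 (by omega)
    · exact hx.lt _ (by omega) (by omega)

namespace LowWalk

variable {c a b : V}

lemma single (h : G.Adj a b) : LowWalk G c a b :=
  ⟨1, fun i => if i = 0 then a else b, one_pos, rfl, rfl,
    ⟨fun r hr => by simpa [Nat.lt_one_iff.mp hr] using h, fun r h0 h1 => by omega⟩⟩

lemma symm (h : LowWalk G c a b) : LowWalk G c b a := by
  obtain ⟨n, x, hn, h0, hxn, hx⟩ := h
  refine ⟨n, fun i => x (n - i), hn, by simpa using hxn, by simpa using h0,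
    ⟨fun r hr => ?_, fun r h0 h1 => hx.lt _ (by omega) (by omega)⟩⟩
  rw [show n - r = n - (r + 1) + 1 by omega]
  exact (hx.adj _ (by omega)).symm

lemma mono {c' : V} (hcc' : c ≤ c') (h : LowWalk G c a b) : LowWalk G c' a b := by
  obtain ⟨n, x, hn, h0, hxn, hx⟩ := h
  exact ⟨n, x, hn, h0, hxn, ⟨hx.adj, fun r h0 h1 => (hx.lt r h0 h1).trans_le hcc'⟩⟩

lemma trans {k : V} (h₁ : LowWalk G c a k) (h₂ : LowWalk G c k b) (hk : k < c) :
    LowWalk G c a b := by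
  obtain ⟨n₁, x, hn₁, hx0, hxn, hx⟩ := h₁
  obtain ⟨n₂, y, hn₂, hy0, hyn, hy⟩ := h₂
  have hjoin : ∀ i, n₁ ≤ i → (if i < n₁ then x i else y (i - n₁)) = y (i - n₁) :=
    fun i hi => if_neg (by omega)
  refine ⟨n₁ + n₂, fun i => if i < n₁ then x i else y (i - n₁), by omega, by simp [hn₁, hx0],
    by simpa [hjoin] using hyn, ⟨fun r hr => ?_, fun r h0 h1 => ?_⟩⟩
  · by_cases hr₁ : r + 1 < n₁
    · simpa [hr₁, show r < n₁ by omega] using hx.adj r (by omega)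
    by_cases hr₁' : r < n₁
    · obtain rfl : r + 1 = n₁ := by omega
      simpa [hr₁', hy0, ← hxn] using hx.adj r (by omega)
    · rw [if_neg hr₁, if_neg hr₁', show r + 1 - n₁ = r - n₁ + 1 by omega]
      exact hy.adj _ (by omega)
  · split_ifs with hr₁
    · exact hx.lt r h0 hr₁
    · rcases (not_lt.mp hr₁).eq_or_lt with rfl | hlt
      · simpa [hy0] using hk
      · exact hy.lt _ (by omega) (by omega)

/-- A shortest low walk from `a` down to `b` is an induced path. -/
theorem exists_isInducedPath (h : LowWalk G b a b) (hba : b < a) :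
    ∃ n x, x 0 = a ∧ x n = b ∧ IsInducedPath G x n ∧ ∀ r, 0 < r → r < n → x r < b := by
  have hex : ∃ n x, x 0 = a ∧ x n = b ∧ IsLowWalk G b x n :=
    let ⟨n, x, _, h0, hn, hx⟩ := h
    ⟨n, x, h0, hn, hx⟩
  obtain ⟨x, h0, hn, hx⟩ := Nat.find_spec hex
  have hshort : ∀ r r', r < r' → r' ≤ Nat.find hex → G.Adj (x r) (x r') → r' = r + 1 := by
    intro r r' hrr' hr' hadj
    by_contra hne
    obtain ⟨y, hy0, hyn, hy⟩ := hx.splice hrr' hr' hadj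
    exact Nat.find_min hex (m := Nat.find hex - (r' - r - 1)) (by omega)
      ⟨y, hy0.trans h0, hyn.trans hn, hy⟩
  refine ⟨Nat.find hex, x, h0, hn, ⟨fun r hr r' hr' hxr => ?_, hx.adj,
    fun r r' hrr' hr' hadj => absurd (hshort r r' (by omega) hr' hadj) (by omega)⟩, hx.lt⟩
  rw [Set.mem_Iic] at hr hr'
  have key : ∀ r r', r < r' → r' ≤ Nat.find hex → x r ≠ x r' := by
    intro r r' hrr' hr' hxr
    rcases hr'.lt_or_eq with hr'n | rfl
    · have := hshort r (r' + 1) (by omega) hr'n (hxr ▸ hx.adj r' hr'n)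
      omega
    · rcases Nat.eq_zero_or_pos r with rfl | hr0
      · exact hba.ne (hn.symm.trans (h0 ▸ hxr).symm)
      · exact (hx.lt r hr0 hrr').ne (hxr.trans hn)
  rcases lt_trichotomy r r' with hlt | heq | hgt
  · exact absurd hxr (key r r' hlt hr')
  · exact heq
  · exact absurd hxr.symm (key r' r hgt hr)

end LowWalk

end LowWalks

lemma lowWalk_of_triSeq_adj {p m : ℕ} {G : SimpleGraph (Fin p)} {a b : Fin p}
    (h : (triSeq (Equiv.refl (Fin p)) G m).Adj a b) : LowWalk G (min a b) a b := by
  induction m generalizing a b with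
  | zero => exact .single h
  | succ m ih =>
    rcases h with h | ⟨-, hm, ha, hb, hak, hbk⟩
    · exact ih h
    have hk : (⟨m, hm⟩ : Fin p) < min a b := lt_min ha hb
    have hle : ∀ y : Fin p, min y ⟨m, hm⟩ ≤ min a b := fun y => (min_le_right _ _).trans hk.le
    exact ((ih hak).mono (hle a)).trans ((ih hbk).mono (hle b)).symm hk

lemma Dof_update_one {p : ℕ} (w : Fin p) (t : ℝ) (k : Fin p) :
    Dof p (Function.update 1 w t) k = if w ≤ k then t else 1 := by
  rw [Dof]
  split_ifs with hwk
  · rw [prod_eq_single_of_mem w (mem_Iic.mpr hwk) fun l _ hlw => by simp [hlw]]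
    simp
  · exact prod_eq_one fun l hl => by
      simp [show l ≠ w from fun h => hwk (h ▸ mem_Iic.mp hl)]

lemma eq_zero_of_forall_add_div_eq_div_add_div_sq {α β K c : ℝ}
    (h : ∀ t : ℝ, 0 < t → α + β / t = K / t + c / t ^ 2) : c = 0 := by
  have h₁ := h 1 one_pos
  have h₂ := h 2 two_pos
  have h₄ := h 4 four_pos
  norm_num at h₁ h₂ h₄
  linarith

lemma exists_lt_between [Preorder V] {x : ℕ → V} {a b c q : ℕ}
    (hc : min a b < c ∧ c < max a b)
    (hcmax : ∀ d, min a b < d → d < max a b → d ≠ c → x d < x c)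
    (hqa : x q < x a) (hqb : x q < x b) (hqc : q ≠ c) :
    ∃ d, x q < x d ∧ ((min q a < d ∧ d < max q a) ∨ (min q b < d ∧ d < max q b)) := by
  by_cases hq : min a b < q ∧ q < max a b
  · exact ⟨c, hcmax q hq.1 hq.2 hqc, by omega⟩
  have hqa' : q ≠ a := fun h => hqa.ne (congrArg x h)
  have hqb' : q ≠ b := fun h => hqb.ne (congrArg x h)
  by_cases ha : min q b < a ∧ a < max q b
  · exact ⟨a, hqa, .inr ha⟩
  · exact ⟨b, hqb, .inl (by omega)⟩

section Cholesky

variable {p : ℕ} {G : SimpleGraph (Fin p)} {ℓ : Fin p → Fin p → ℝ} {D : Fin p → ℝ}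

lemma cholCol_self (j : Fin p) : cholCol p G ℓ D j j = 1 := by
  rw [cholCol]; simp

lemma cholCol_of_lt {i j : Fin p} (hij : i < j) : cholCol p G ℓ D j i = 0 := by
  rw [cholCol]; beta_reduce; rw [dif_pos j.isLt, if_neg (by omega), if_pos (by omega)]

lemma cholCol_of_adj {i j : Fin p} (hji : j < i) (hadj : G.Adj i j) :
    cholCol p G ℓ D j i = ℓ i j := by
  rw [cholCol]; beta_reduce
  rw [dif_pos j.isLt, if_neg (by omega), if_neg (by omega), Fin.eta, if_pos hadj]

lemma cholCol_of_not_adj {i j : Fin p} (hji : j < i) (hadj : ¬ G.Adj i j) :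
    cholCol p G ℓ D j i =
      -(∑ k ∈ Iio j, cholCol p G ℓ D k i * cholCol p G ℓ D k j * D k) / D j := by
  rw [cholCol]; beta_reduce
  rw [dif_pos j.isLt, if_neg (by omega), if_neg (by omega), Fin.eta, if_neg hadj]
  congr 2
  refine sum_bij (fun k _ => ⟨k.1, (mem_range.mp k.2).trans j.isLt⟩)
    (fun k _ => mem_Iio.mpr (Fin.lt_def.mpr (mem_range.mp k.2)))
    (fun a _ b _ h => Subtype.ext (Fin.ext_iff.mp h))
    (fun k hk => ⟨⟨k, mem_range.mpr (Fin.lt_def.mp (mem_Iio.mp hk))⟩, mem_attach _ _, rfl⟩)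
    (fun _ _ => rfl)

lemma cholCol_congr_of_eqOn_Iic {D' : Fin p → ℝ} (j : Fin p) (hD : ∀ k ≤ j, D k = D' k)
    (i : Fin p) : cholCol p G ℓ D j i = cholCol p G ℓ D' j i := by
  induction j using WellFoundedLT.induction generalizing i with
  | ind j ih =>
    rcases lt_trichotomy i j with hij | rfl | hji
    · rw [cholCol_of_lt hij, cholCol_of_lt hij]
    · rw [cholCol_self, cholCol_self]
    by_cases hadj : G.Adj i j
    · rw [cholCol_of_adj hji hadj, cholCol_of_adj hji hadj]
    rw [cholCol_of_not_adj hji hadj, cholCol_of_not_adj hji hadj, hD j le_rfl]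
    congr 2
    refine sum_congr rfl fun k hk => ?_
    have hkj := mem_Iio.mp hk
    have hD' : ∀ m ≤ k, D m = D' m := fun m hm => hD m (hm.trans hkj.le)
    rw [ih k hkj hD', ih k hkj hD', hD k hkj.le]

lemma cholCol_eq_zero_of_notMem {A : Set (Fin p)} (hℓ : ∀ a b, ℓ a b ≠ 0 → a ∈ A ∧ b ∈ A)
    {i j : Fin p} (hji : j < i) (hA : i ∉ A ∨ j ∉ A) : cholCol p G ℓ D j i = 0 := by
  induction j using WellFoundedLT.induction generalizing i with
  | ind j ih =>
    by_cases hadj : G.Adj i j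
    · rw [cholCol_of_adj hji hadj]
      by_contra h
      have := hℓ i j h
      tauto
    rw [cholCol_of_not_adj hji hadj, sum_eq_zero, neg_zero, zero_div]
    intro k hk
    have hkj := mem_Iio.mp hk
    rcases hA with hi | hj
    · rw [ih k hkj (hkj.trans hji) (.inl hi), zero_mul, zero_mul]
    · rw [ih k hkj hkj (.inl hj), mul_zero, zero_mul]

lemma exists_polynomial_cholCol {ℓ : ℝ → Fin p → Fin p → ℝ}
    (hℓ : ∀ a b, ∃ q : ℝ[X], ∀ τ, ℓ τ a b = q.eval τ) (j i : Fin p) :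
    ∃ q : ℝ[X], ∀ τ, cholCol p G (ℓ τ) D j i = q.eval τ := by
  induction j using WellFoundedLT.induction generalizing i with
  | ind j ih =>
    rcases lt_trichotomy i j with hij | rfl | hji
    · exact ⟨0, fun τ => by rw [cholCol_of_lt hij, eval_zero]⟩
    · exact ⟨1, fun τ => by rw [cholCol_self, eval_one]⟩
    by_cases hadj : G.Adj i j
    · obtain ⟨q, hq⟩ := hℓ i j
      exact ⟨q, fun τ => by rw [cholCol_of_adj hji hadj, hq]⟩
    choose! Q hQ using ih
    refine ⟨-(∑ k ∈ Iio j, Q k i * Q k j * C (D k)) * C (D j)⁻¹, fun τ => ?_⟩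
    rw [cholCol_of_not_adj hji hadj, div_eq_mul_inv]
    simp only [eval_mul, eval_neg, eval_finsetSum, eval_C]
    congr 2
    exact sum_congr rfl fun k hk => by rw [hQ k (mem_Iio.mp hk), hQ k (mem_Iio.mp hk)]

lemma cholCol_of_not_adj_of_single {i j k₀ : Fin p} (hji : j < i) (hadj : ¬ G.Adj i j)
    (hk₀ : k₀ ≠ j) (h : ∀ k < j, k ≠ k₀ → cholCol p G ℓ D k i * cholCol p G ℓ D k j * D k = 0) :
    cholCol p G ℓ D j i = -(cholCol p G ℓ D k₀ i * cholCol p G ℓ D k₀ j * D k₀) / D j := by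
  rw [cholCol_of_not_adj hji hadj, sum_eq_single k₀ (fun k hk => h k (mem_Iio.mp hk)) fun hk =>
    by rw [cholCol_of_lt ((not_lt.mp (mem_Iio.not.mp hk)).lt_of_ne hk₀.symm), mul_zero, zero_mul]]

/-- Only the highest path vertex strictly between `x a` and `x b` can contribute to the fill-in
sum. -/
theorem IsInducedPath.cholCol_ne_zero_iff {x : ℕ → Fin p} {n : ℕ} (hx : IsInducedPath G x n)
    (hℓ : ∀ a b, ℓ a b ≠ 0 → a ∈ x '' Set.Iic n ∧ b ∈ x '' Set.Iic n)
    (hℓx : ∀ r < n, ℓ (x r) (x (r + 1)) ≠ 0 ∧ ℓ (x (r + 1)) (x r) ≠ 0)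
    (hD : ∀ k, D k ≠ 0) {a b : ℕ} (ha : a ≤ n) (hb : b ≤ n) (hab : x a < x b) :
    cholCol p G ℓ D (x a) (x b) ≠ 0 ↔ ∀ c, min a b < c → c < max a b → x c < x a := by
  induction hj : x a using WellFoundedLT.induction generalizing a b with
  | ind j ih =>
  subst hj
  have hne : a ≠ b := fun h => hab.ne (congrArg x h)
  by_cases hadj : G.Adj (x b) (x a)
  · rw [cholCol_of_adj hab hadj]
    rcases (hx.adj_iff hb ha).mp hadj with rfl | rfl
    · exact iff_of_true (hℓx b (by omega)).1 fun c _ _ => by omega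
    · exact iff_of_true (hℓx a (by omega)).2 fun c _ _ => by omega
  have hgap : min a b + 1 < max a b := by
    rw [hx.adj_iff hb ha] at hadj
    omega
  obtain ⟨c, hcI, hcmax⟩ := (Finset.Ioo (min a b) (max a b)).exists_max_image x
    ⟨min a b + 1, mem_Ioo.mpr ⟨by omega, hgap⟩⟩
  rw [mem_Ioo] at hcI
  have hcn : c ≤ n := by omega
  have hlt_c : ∀ d, min a b < d → d < max a b → d ≠ c → x d < x c := fun d h1 h2 hdc =>
    lt_of_le_of_ne (hcmax d (mem_Ioo.mpr ⟨h1, h2⟩))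
      fun h => hdc (hx.injOn (Set.mem_Iic.mpr (by omega)) (Set.mem_Iic.mpr hcn) h)
  have hzero_of : ∀ q e d, q ≤ n → e ≤ n → x q < x a → x q < x e →
      min q e < d → d < max q e → x q < x d → cholCol p G ℓ D (x q) (x e) = 0 := by
    intro q e d hq he hqa hqe h1 h2 hqd
    by_contra h
    exact (ih (x q) hqa hq he hqe rfl).mp h d h1 h2 |>.not_gt hqd
  have hterm : ∀ k < x a, k ≠ x c →
      cholCol p G ℓ D k (x b) * cholCol p G ℓ D k (x a) * D k = 0 := by
    intro k hka hkc
    by_cases hkA : k ∈ x '' Set.Iic n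
    swap
    · rw [cholCol_eq_zero_of_notMem hℓ (hka.trans hab) (.inr hkA), zero_mul, zero_mul]
    obtain ⟨q, hq, rfl⟩ := hkA
    rw [Set.mem_Iic] at hq
    obtain ⟨d, hqd, hd⟩ :=
      exists_lt_between hcI hlt_c hka (hka.trans hab) fun h => hkc (congrArg x h)
    rcases hd with ⟨h1, h2⟩ | ⟨h1, h2⟩
    · rw [hzero_of q a d hq ha hka hka h1 h2 hqd, mul_zero, zero_mul]
    · rw [hzero_of q b d hq hb hka (hka.trans hab) h1 h2 hqd, zero_mul, zero_mul]
  have hca : x c ≠ x a := fun h => by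
    have := hx.injOn (Set.mem_Iic.mpr hcn) (Set.mem_Iic.mpr ha) h
    omega
  rw [cholCol_of_not_adj_of_single hab hadj hca hterm]
  rcases hca.lt_or_gt with hca | hac
  · have hne_b : cholCol p G ℓ D (x c) (x b) ≠ 0 :=
      (ih (x c) hca hcn hb (hca.trans hab) rfl).mpr fun d h1 h2 =>
        hlt_c d (by omega) (by omega) (by omega)
    have hne_a : cholCol p G ℓ D (x c) (x a) ≠ 0 :=
      (ih (x c) hca hcn ha hca rfl).mpr fun d h1 h2 =>
        hlt_c d (by omega) (by omega) (by omega)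
    refine iff_of_true (div_ne_zero (neg_ne_zero.mpr
      (mul_ne_zero (mul_ne_zero hne_b hne_a) (hD _))) (hD _)) fun d h1 h2 => ?_
    rcases eq_or_ne d c with rfl | hdc
    · exact hca
    · exact (hlt_c d h1 h2 hdc).trans hca
  · rw [cholCol_of_lt hac, mul_zero, zero_mul, neg_zero, zero_div]
    exact iff_of_false (not_not.mpr rfl) fun h => (h c hcI.1 hcI.2).not_gt hac

/-- Rescaling `D̃_w` by `t` divides column `w` by `t` and leaves the earlier columns unchanged. -/
lemma cholCol_dof_update_one {u v w : Fin p} (hwv : w < v) (hvu : v < u)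
    (huv : ¬ G.Adj u v) (huw : ¬ G.Adj u w) (hvw : ¬ G.Adj v w)
    (hgap : ∀ D k, w < k → k < v → cholCol p G ℓ D k v = 0) :
    ∃ K, ∀ t, 0 < t → cholCol p G ℓ (Dof p (Function.update 1 w t)) v u =
      K / t - cholCol p G ℓ 1 w u * cholCol p G ℓ 1 w v / t ^ 2 := by
  refine ⟨-∑ k ∈ Iio w, cholCol p G ℓ 1 k u * cholCol p G ℓ 1 k v, fun t ht => ?_⟩
  set Dt := Dof p (Function.update 1 w t)
  have hDt : ∀ k, Dt k = if w ≤ k then t else 1 := Dof_update_one w t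
  have hlow : ∀ k < w, ∀ i, cholCol p G ℓ Dt k i = cholCol p G ℓ 1 k i := fun k hk =>
    cholCol_congr_of_eqOn_Iic k fun m hm => by
      rw [hDt, if_neg (not_le.mpr (hm.trans_lt hk)), Pi.one_apply]
  have hsum : ∀ i, ∑ k ∈ Iio w, cholCol p G ℓ Dt k i * cholCol p G ℓ Dt k w * Dt k =
      ∑ k ∈ Iio w, cholCol p G ℓ 1 k i * cholCol p G ℓ 1 k w * (1 : Fin p → ℝ) k := fun i =>
    sum_congr rfl fun k hk => by
      have hkw := mem_Iio.mp hk
      rw [hlow k hkw, hlow k hkw, hDt, if_neg (not_le.mpr hkw), Pi.one_apply]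
  have hcol : ∀ i, w < i → ¬ G.Adj i w → cholCol p G ℓ Dt w i = cholCol p G ℓ 1 w i / t :=
    fun i hwi hiw => by
      rw [cholCol_of_not_adj hwi hiw, cholCol_of_not_adj hwi hiw, hsum, hDt, if_pos le_rfl,
        Pi.one_apply, div_one]
  have hIic : Iic w ⊆ Iio v := fun k hk => mem_Iio.mpr ((mem_Iic.mp hk).trans_lt hwv)
  rw [cholCol_of_not_adj hvu huv, hDt, if_pos hwv.le,
    ← sum_subset hIic fun k hk hkw => by
      rw [hgap Dt k (not_le.mp (mem_Iic.not.mp hkw)) (mem_Iio.mp hk), mul_zero, zero_mul],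
    ← Iio_insert, sum_insert notMem_Iio_self, hcol u (hwv.trans hvu) huw, hcol v hwv hvw,
    hDt, if_pos le_rfl, sum_congr rfl fun k hk => by
      have hkw := mem_Iio.mp hk
      rw [hlow k hkw, hlow k hkw, hDt, if_neg (not_le.mpr hkw)]]
  field_simp
  ring

lemma exists_cholCol_ne_zero_and_ne_zero {ℓ : ℝ → Fin p → Fin p → ℝ}
    (hℓ : ∀ a b, ∃ q : ℝ[X], ∀ τ, ℓ τ a b = q.eval τ) {i j i' j' : Fin p} {τ₁ τ₂ : ℝ}
    (h₁ : cholCol p G (ℓ τ₁) D j i ≠ 0) (h₂ : cholCol p G (ℓ τ₂) D j' i' ≠ 0) :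
    ∃ τ, cholCol p G (ℓ τ) D j i ≠ 0 ∧ cholCol p G (ℓ τ) D j' i' ≠ 0 := by
  obtain ⟨q₁, hq₁⟩ := exists_polynomial_cholCol (G := G) (D := D) hℓ j i
  obtain ⟨q₂, hq₂⟩ := exists_polynomial_cholCol (G := G) (D := D) hℓ j' i'
  have hq : q₁ * q₂ ≠ 0 := mul_ne_zero (fun h => h₁ (by rw [hq₁, h, eval_zero]))
    (fun h => h₂ (by rw [hq₂, h, eval_zero]))
  by_contra! hall
  refine hq (Polynomial.funext fun τ => ?_)
  rw [eval_mul, eval_zero, ← hq₁, ← hq₂]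
  by_cases h : cholCol p G (ℓ τ) D j i = 0
  · rw [h, zero_mul]
  · rw [hall τ h, mul_zero]

end Cholesky

section PathIndicator

variable {x : ℕ → V} {n : ℕ}

noncomputable def pathIndicator (x : ℕ → V) (n : ℕ) (a b : V) : ℝ :=
  if ∃ r < n, (a = x r ∧ b = x (r + 1)) ∨ (a = x (r + 1) ∧ b = x r) then 1 else 0

lemma mem_image_Iic_of_pathIndicator_ne_zero {a b : V} (h : pathIndicator x n a b ≠ 0) :
    a ∈ x '' Set.Iic n ∧ b ∈ x '' Set.Iic n := by
  rw [pathIndicator, ne_eq, ite_eq_right_iff, not_forall] at h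
  obtain ⟨⟨r, hr, ⟨rfl, rfl⟩ | ⟨rfl, rfl⟩⟩, -⟩ := h
  · exact ⟨⟨r, Set.mem_Iic.mpr hr.le, rfl⟩, ⟨r + 1, Set.mem_Iic.mpr hr, rfl⟩⟩
  · exact ⟨⟨r + 1, Set.mem_Iic.mpr hr, rfl⟩, ⟨r, Set.mem_Iic.mpr hr.le, rfl⟩⟩

lemma pathIndicator_ne_zero {r : ℕ} (hr : r < n) :
    pathIndicator x n (x r) (x (r + 1)) ≠ 0 ∧ pathIndicator x n (x (r + 1)) (x r) ≠ 0 := by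
  constructor <;> rw [pathIndicator, if_pos ⟨r, hr, by simp⟩] <;> exact one_ne_zero

end PathIndicator

lemma eq_or_le_of_mem_image_Iic [Preorder V] {x : ℕ → V} {n : ℕ} {a b y : V} (h0 : x 0 = a)
    (hn : x n = b) (hlt : ∀ r, 0 < r → r < n → x r < b) (hy : y ∈ x '' Set.Iic n) :
    y = a ∨ y ≤ b := by
  obtain ⟨r, hr, rfl⟩ := hy
  rcases Nat.eq_zero_or_pos r with rfl | hr0
  · exact .inl h0
  rcases (Set.mem_Iic.mp hr).lt_or_eq with hrn | rfl
  · exact .inr (hlt r hr0 hrn).le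
  · exact .inr hn.le

lemma IsInducedPath.cholCol_pathIndicator_ne_zero {p n : ℕ} {G : SimpleGraph (Fin p)}
    {x : ℕ → Fin p} {a b : Fin p} (hx : IsInducedPath G x n) (h0 : x 0 = a) (hn : x n = b)
    (hba : b < a) (hlt : ∀ r, 0 < r → r < n → x r < b) :
    cholCol p G (pathIndicator x n) 1 b a ≠ 0 := by
  subst h0 hn
  exact (hx.cholCol_ne_zero_iff (fun _ _ => mem_image_Iic_of_pathIndicator_ne_zero)
    (fun _ => pathIndicator_ne_zero) (fun _ => one_ne_zero) le_rfl n.zero_le hba).mpr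
    fun c h1 h2 => hlt c (by omega) (by omega)

theorem PropertyB.not_lowWalk_and_lowWalk {p : ℕ} {G : SimpleGraph (Fin p)} (hB : PropertyB p G)
    {u v w : Fin p} (hwv : w < v) (hvu : v < u)
    (huv : ¬ G.Adj u v) (huw : ¬ G.Adj u w) (hvw : ¬ G.Adj v w) :
    ¬ (LowWalk G w u w ∧ LowWalk G w v w) := by
  rintro ⟨hu, hv⟩
  obtain ⟨n₁, x₁, hx₁0, hx₁n, hx₁, hlt₁⟩ := hu.exists_isInducedPath (hwv.trans hvu)
  obtain ⟨n₂, x₂, hx₂0, hx₂n, hx₂, hlt₂⟩ := hv.exists_isInducedPath hwv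
  set χ₁ := pathIndicator x₁ n₁
  set χ₂ := pathIndicator x₂ n₂
  set ℓ : ℝ → Fin p → Fin p → ℝ := fun τ a b => τ * χ₁ a b + (1 - τ) * χ₂ a b with hℓ
  have hℓpoly : ∀ a b, ∃ q : ℝ[X], ∀ τ, ℓ τ a b = q.eval τ := fun a b =>
    ⟨C (χ₂ a b) + (C (χ₁ a b) - C (χ₂ a b)) * X, fun τ => by simp [hℓ]; ring⟩
  have h₁ : cholCol p G (ℓ 1) 1 w u ≠ 0 := by
    simpa [hℓ] using hx₁.cholCol_pathIndicator_ne_zero hx₁0 hx₁n (hwv.trans hvu) hlt₁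
  have h₂ : cholCol p G (ℓ 0) 1 w v ≠ 0 := by
    simpa [hℓ] using hx₂.cholCol_pathIndicator_ne_zero hx₂0 hx₂n hwv hlt₂
  obtain ⟨τ, hτu, hτv⟩ := exists_cholCol_ne_zero_and_ne_zero hℓpoly h₁ h₂
  have hsupp : ∀ a b, ℓ τ a b ≠ 0 →
      a ∈ x₁ '' Set.Iic n₁ ∪ x₂ '' Set.Iic n₂ ∧ b ∈ x₁ '' Set.Iic n₁ ∪ x₂ '' Set.Iic n₂ := by
    intro a b hab
    have hχ : χ₁ a b ≠ 0 ∨ χ₂ a b ≠ 0 := by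
      by_contra! h
      exact hab (by simp [hℓ, h.1, h.2])
    rcases hχ with h | h
    · obtain ⟨ha, hb⟩ := mem_image_Iic_of_pathIndicator_ne_zero h
      exact ⟨.inl ha, .inl hb⟩
    · obtain ⟨ha, hb⟩ := mem_image_Iic_of_pathIndicator_ne_zero h
      exact ⟨.inr ha, .inr hb⟩
  have hgap : ∀ D k, w < k → k < v → cholCol p G (ℓ τ) D k v = 0 := by
    refine fun D k hwk hkv => cholCol_eq_zero_of_notMem hsupp hkv (.inr ?_)
    rintro (hk | hk)
    · rcases eq_or_le_of_mem_image_Iic hx₁0 hx₁n hlt₁ hk with rfl | hk <;> order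
    · rcases eq_or_le_of_mem_image_Iic hx₂0 hx₂n hlt₂ hk with rfl | hk <;> order
  obtain ⟨K, hK⟩ := cholCol_dof_update_one hwv hvu huv huw hvw hgap
  obtain ⟨α, β, hαβ⟩ := hB u v hvu huv w (ℓ τ) 1 fun _ => one_pos
  exact mul_ne_zero hτu hτv <| neg_eq_zero.mp <|
    eq_zero_of_forall_add_div_eq_div_add_div_sq fun t ht => by rw [← hαβ t ht, hK t ht]; ring

theorem PropertyB.not_triangulation_adj_and_adj {p : ℕ} {G : SimpleGraph (Fin p)}
    (hB : PropertyB p G) {u v w : Fin p} (hwu : w < u) (hwv : w < v) (hne : u ≠ v)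
    (huv : ¬ G.Adj u v) (huw : ¬ G.Adj u w) (hvw : ¬ G.Adj v w) :
    ¬ ((triangulation (Equiv.refl (Fin p)) G).Adj u w ∧
      (triangulation (Equiv.refl (Fin p)) G).Adj v w) := by
  rintro ⟨hTu, hTv⟩
  have hu := lowWalk_of_triSeq_adj hTu
  have hv := lowWalk_of_triSeq_adj hTv
  rw [min_eq_right hwu.le] at hu
  rw [min_eq_right hwv.le] at hv
  rcases hne.lt_or_gt with huv' | hvu
  · exact hB.not_lowWalk_and_lowWalk hwu huv' (fun h => huv h.symm) hvw huw ⟨hv, hu⟩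
  · exact hB.not_lowWalk_and_lowWalk hwv hvu huv huw hvw ⟨hu, hv⟩

theorem isGBOrdering_of_propertyA_and_propertyB_general (p : ℕ) (G : SimpleGraph (Fin p))
    (hB : PropertyB p G) :
    IsGBOrdering (Equiv.refl (Fin p)) G ∧ IsGB G := by
  have hGB : IsGBOrdering (Equiv.refl (Fin p)) G := by
    rintro ⟨u, v, w, huv, hvw, huw, hTuv, hTvw, hTuw⟩
    have := hTuv.ne
    have := hTvw.ne
    have := hTuw.ne
    obtain hu | hv | hw : (u < v ∧ u < w) ∨ (v < u ∧ v < w) ∨ (w < u ∧ w < v) := by omega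
    · exact hB.not_triangulation_adj_and_adj hu.1 hu.2 hTvw.ne hvw (huv ·.symm) (huw ·.symm)
        ⟨hTuv.symm, hTuw.symm⟩
    · exact hB.not_triangulation_adj_and_adj hv.1 hv.2 hTuw.ne huw huv (hvw ·.symm)
        ⟨hTuv, hTvw.symm⟩
    · exact hB.not_triangulation_adj_and_adj hw.1 hw.2 hTuv.ne huv huw hvw ⟨hTuw, hTvw⟩
  exact ⟨hGB, p, Equiv.refl _, hGB⟩

/-- Maximality theorem: if `G`, with the identity ordering, satisfies both
Property-A and Property-B, then the identity ordering is a Generalized Bartlett ordering of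
`G`; in particular `G` is a Generalized Bartlett graph. -/
theorem isGBOrdering_of_propertyA_and_propertyB (p : ℕ) (G : SimpleGraph (Fin p))
    (hA : PropertyA p G) (hB : PropertyB p G) :
    IsGBOrdering (Equiv.refl (Fin p)) G ∧ IsGB G :=
  isGBOrdering_of_propertyA_and_propertyB_general p G hB
end
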